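/- arXiv:2111.02480 — 6 statements merged into one kernel-verified Lean document; each statement's English description precedes it below -/
import Mathlib

section
/- Let A be a Wheeler DFA with states u_1 < u_2 < ... < u_n in Wheeler order. For any single character a ∈ Σ, if v = δ(u_i, a) and v' = δ(u_{i+1}, a) are both defined and v ≠ v', then v and v' are adjacent in the Wheeler order, i.e., v = u_j and v' = u_{j+1} for some j, with v < v'. -/
/-- A Wheeler DFA over a linearly ordered state set `Q` (the Wheeler order)
and a linearly ordered alphabet `A`.  The transition function is partial
(`Option`-valued).  The three Wheeler axioms are part of the structure. -/
structure WDFA (Q A : Type) [LinearOrder Q] [LinearOrder A] where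
  delta : Q → A → Option Q
  start : Q
  F : Set Q
  /-- Wheeler axiom (i): the initial state is minimum. -/
  start_le : ∀ u, start ≤ u
  /-- Wheeler axiom (ii). -/
  w2 : ∀ {u v : Q} {a b : A} {u' v' : Q},
      delta u a = some u' → delta v b = some v' → a < b → u' < v'
  /-- Wheeler axiom (iii). -/
  w3 : ∀ {u v : Q} {a : A} {u' v' : Q},
      delta u a = some u' → delta v a = some v' → u < v → u' ≤ v'

namespace WDFA

variable {Q A : Type} [LinearOrder Q] [LinearOrder A]

/-- Extension of the (partial) transition function to strings. -/
def dhat (M : WDFA Q A) : Q → List A → Option Q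
  | q, [] => some q
  | q, a :: w => (M.delta q a).bind (fun p => M.dhat p w)

/-- `q` accepts the string `w`. -/
def Acc (M : WDFA Q A) (q : Q) (w : List A) : Prop :=
  ∃ p, M.dhat q w = some p ∧ p ∈ M.F

/-- Set of labels of outgoing edges of `q`. -/
def out (M : WDFA Q A) (q : Q) : Set A := {a | (M.delta q a).isSome}

/-- Myhill–Nerode state equivalence (with equal domains of definition). -/
def MN (M : WDFA Q A) (u v : Q) : Prop :=
  ∀ w : List A, (M.dhat u w).isSome = (M.dhat v w).isSome ∧ (M.Acc u w ↔ M.Acc v w)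

/-- Myhill–Nerode state equivalence, acceptance-only version
(undefined counts as rejecting). -/
def MNacc (M : WDFA Q A) (u v : Q) : Prop :=
  ∀ w : List A, M.Acc u w ↔ M.Acc v w

/-- `u` and `v` are adjacent in the Wheeler order. -/
def Adj (M : WDFA Q A) (u v : Q) : Prop :=
  u < v ∧ ∀ w : Q, ¬ (u < w ∧ w < v)

/-- `lam` is the incoming-label map: `lam start = ⊥` (the special symbol `#`)
and every transition entering `v` is labelled `lam v`. -/
def HasLam (M : WDFA Q A) (lam : Q → WithBot A) : Prop :=
  lam M.start = ⊥ ∧ ∀ u a v, M.delta u a = some v → lam v = (a : WithBot A)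

/-- Every non-initial state has an incoming transition (reachability). -/
def Reach1 (M : WDFA Q A) : Prop :=
  ∀ u, u ≠ M.start → ∃ p a, M.delta p a = some u

/-- Every state accepts some string (is final or reaches a final state). -/
def Coacc (M : WDFA Q A) : Prop := ∀ u, ∃ w, M.Acc u w

/-- The minimum-WDFA equivalence `≡`: `u` and `v` have the same incoming
label, are Myhill–Nerode equivalent, and so is every state between them in
the Wheeler order. -/
def Equ (M : WDFA Q A) (lam : Q → WithBot A) (u v : Q) : Prop :=
  lam u = lam v ∧ M.MN u v ∧
    ∀ w, min u v ≤ w → w ≤ max u v → lam w = lam u ∧ M.MN w u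

/-- `(u,v)` is a node of the border graph: adjacent states with equal
incoming labels. -/
def IsBorder (M : WDFA Q A) (lam : Q → WithBot A) (u v : Q) : Prop :=
  M.Adj u v ∧ lam u = lam v

/-- Edge relation of the border graph `B(A)`: there is an edge from the
border `x` to the border `y` whenever `x.1 = δ(y.1, λ(x.1))` and
`x.2 = δ(y.2, λ(x.1))`. -/
def EdgeZ (M : WDFA Q A) (lam : Q → WithBot A) : Q × Q → Q × Q → Prop :=
  fun x y => M.IsBorder lam x.1 x.2 ∧ M.IsBorder lam y.1 y.2 ∧
    ∃ a : A, lam x.1 = (a : WithBot A) ∧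
      M.delta y.1 a = some x.1 ∧ M.delta y.2 a = some x.2

/-- Transition function of the quotient automaton `A/st`
(`δ([u],a) = [δ(u,a)]`, implemented via representatives). -/
noncomputable def qdelta (M : WDFA Q A) (st : Setoid Q) (c : Quotient st) (a : A) :
    Option (Quotient st) :=
  (M.delta (Quotient.out c) a).map (Quotient.mk st)

/-- String extension of the quotient transition function. -/
noncomputable def qdhat (M : WDFA Q A) (st : Setoid Q) : Quotient st → List A → Option (Quotient st)
  | c, [] => some c
  | c, a :: w => (M.qdelta st c a).bind (fun d => M.qdhat st d w)

/-- The quotient automaton accepts `w`. -/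
def qAcc (M : WDFA Q A) (st : Setoid Q) (w : List A) : Prop :=
  ∃ c, M.qdhat st (Quotient.mk st M.start) w = some c ∧
    ∃ u ∈ M.F, Quotient.mk st u = c

/-- Order induced on `≡`-classes by the Wheeler order (classes are
intervals, so comparing arbitrary representatives is well defined). -/
def qle (st : Setoid Q) (c d : Quotient st) : Prop :=
  c = d ∨ ∀ u v : Q, Quotient.mk st u = c → Quotient.mk st v = d → u < v

end WDFA

/-! A state strictly between `δ(u,a)` and `δ(u',a)` is not the start state, so it is entered
by some edge `δ(p,b)`. Axiom (ii) forces `b = a`, and axiom (iii) together with determinism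
forces `u < p < u'`, which adjacency of `u` and `u'` rules out. -/

namespace WDFA

variable {Q A : Type} [LinearOrder Q] [LinearOrder A] (M : WDFA Q A)

theorem ne_start_of_lt {v w : Q} (h : v < w) : w ≠ M.start :=
  fun hw => (M.start_le v).not_gt (hw ▸ h)

theorem le_of_delta_lt {u p v w : Q} {a b : A} (hu : M.delta u a = some v)
    (hp : M.delta p b = some w) (h : v < w) : a ≤ b :=
  le_of_not_gt fun hba => (M.w2 hp hu hba).not_gt h

theorem lt_of_delta_lt {u p v w : Q} {a : A} (hu : M.delta u a = some v)
    (hp : M.delta p a = some w) (h : v < w) : u < p := by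
  by_contra! hpu
  rcases hpu.lt_or_eq with hlt | rfl
  · exact (M.w3 hp hu hlt).not_gt h
  · rw [hu, Option.some_inj] at hp
    exact h.ne hp

theorem exists_between_of_delta_lt (hreach : M.Reach1) {u u' v v' w : Q} {a : A}
    (hu : M.delta u a = some v) (hu' : M.delta u' a = some v') (hvw : v < w) (hwv' : w < v') :
    ∃ p, u < p ∧ p < u' ∧ M.delta p a = some w := by
  obtain ⟨p, b, hp⟩ := hreach w (M.ne_start_of_lt hvw)
  obtain rfl : b = a := le_antisymm (M.le_of_delta_lt hp hu' hwv') (M.le_of_delta_lt hu hp hvw)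
  exact ⟨p, M.lt_of_delta_lt hu hp hvw, M.lt_of_delta_lt hp hu' hwv', hp⟩

end WDFA

/-- images under a single character `a` of two Wheeler-adjacent
states, if both defined and distinct, are Wheeler-adjacent (and ordered). -/
theorem wdfa_adjacent_step {Q A : Type} [LinearOrder Q] [LinearOrder A]
    (M : WDFA Q A) (hreach : M.Reach1)
    (u u' : Q) (hadj : M.Adj u u') (a : A) (v v' : Q)
    (h1 : M.delta u a = some v) (h2 : M.delta u' a = some v')
    (hne : v ≠ v') :
    v < v' ∧ M.Adj v v' := by
  have hvv' : v < v' := (M.w3 h1 h2 hadj.1).lt_of_ne hne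
  refine ⟨hvv', hvv', fun w ⟨hvw, hwv'⟩ => ?_⟩
  obtain ⟨p, hup, hpu', -⟩ := M.exists_between_of_delta_lt hreach h1 h2 hvw hwv'
  exact hadj.2 p ⟨hup, hpu'⟩
end

section
/- Let A be a Wheeler DFA with states u_1 < ... < u_n in Wheeler order, and let δ̂ denote the extension of δ to strings. For any string α ∈ Σ*, if δ̂(u_i, α) and δ̂(u_{i+1}, α) are both defined and distinct, then they are adjacent in the Wheeler order, and δ̂(u_i, α) < δ̂(u_{i+1}, α). -/
namespace WDFA

variable {Q A : Type} [LinearOrder Q] [LinearOrder A] {M : WDFA Q A}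

theorem delta_mono {p q w v : Q} {a : A} (hp : M.delta p a = some w)
    (hq : M.delta q a = some v) (hpq : p ≤ q) : w ≤ v := by
  rcases hpq.lt_or_eq with h | rfl
  · exact M.w3 hp hq h
  · rw [hp] at hq
    exact (Option.some.inj hq).le

/-- A state `w` strictly between `v` and `v'` is not the start state, so it has an incoming
edge `p -b-> w`; axiom (ii) forces `b = a` and axiom (iii) then forces `u < p < u'`. -/
theorem Adj.delta_of_ne (hreach : M.Reach1) {u u' v v' : Q} {a : A} (hadj : M.Adj u u')
    (h : M.delta u a = some v) (h' : M.delta u' a = some v') (hne : v ≠ v') :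
    M.Adj v v' := by
  refine ⟨(delta_mono h h' hadj.1.le).lt_of_ne hne, fun w ⟨hvw, hwv'⟩ => ?_⟩
  obtain ⟨p, b, hp⟩ := hreach w ((M.start_le v).trans_lt hvw).ne'
  rcases lt_trichotomy b a with hb | rfl | hb
  · exact (M.w2 hp h hb).not_gt hvw
  · rcases le_or_gt p u with hpu | hup
    · exact (delta_mono hp h hpu).not_gt hvw
    rcases le_or_gt u' p with hu'p | hpu'
    · exact (delta_mono h' hp hu'p).not_gt hwv'
    · exact hadj.2 p ⟨hup, hpu'⟩
  · exact (M.w2 h' hp hb).not_gt hwv'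

theorem Adj.dhat_of_ne (hreach : M.Reach1) {u u' v v' : Q} {α : List A} (hadj : M.Adj u u')
    (h : M.dhat u α = some v) (h' : M.dhat u' α = some v') (hne : v ≠ v') :
    M.Adj v v' := by
  induction α generalizing u u' with
  | nil =>
    simp only [dhat, Option.some.injEq] at h h'
    subst h h'
    exact hadj
  | cons a α ih =>
    simp only [dhat, Option.bind_eq_some_iff] at h h'
    obtain ⟨p, hp, h⟩ := h
    obtain ⟨p', hp', h'⟩ := h'
    have hpp : p ≠ p' := by
      rintro rfl
      exact hne (Option.some.inj (h.symm.trans h'))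
    exact ih (hadj.delta_of_ne hreach hp hp' hpp) h h'

end WDFA

/-- images under any string `α` of two Wheeler-adjacent states,
if both defined and distinct, are Wheeler-adjacent (and ordered). -/
theorem wdfa_adjacent_string {Q A : Type} [LinearOrder Q] [LinearOrder A]
    (M : WDFA Q A) (hreach : M.Reach1)
    (u u' : Q) (hadj : M.Adj u u') (α : List A) (v v' : Q)
    (h1 : M.dhat u α = some v) (h2 : M.dhat u' α = some v')
    (hne : v ≠ v') :
    v < v' ∧ M.Adj v v' := by
  have hvv' := hadj.dhat_of_ne hreach h1 h2 hne
  exact ⟨hvv'.1, hvv'⟩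
end

section
/- The equivalence relation ≡ on a Wheeler DFA — which identifies states in maximal runs of Wheeler-consecutive states that share the same incoming label and are pairwise Myhill-Nerode equivalent — is right-invariant: if u ≡ v, then for every character a, δ(u,a) is defined iff δ(v,a) is defined, and when defined, δ(u,a) ≡ δ(v,a). -/
namespace WDFA

variable {Q A : Type} [LinearOrder Q] [LinearOrder A]

/-!
Transitions preserve Myhill–Nerode equivalence, and `δ(·, a)` is monotone. By Wheeler
axiom (ii) and reachability, every state strictly between `δ(u, a)` and `δ(v, a)` is the
`a`-successor of a state between `u` and `v`, so it inherits the label `a` and, from that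
state's equivalence with `u`, Myhill–Nerode equivalence with `δ(u, a)`.
-/

section RightInvariance

variable {M : WDFA Q A}

lemma dhat_cons_of_delta_eq_some {q q' : Q} {a : A} (h : M.delta q a = some q')
    (w : List A) : M.dhat q (a :: w) = M.dhat q' w := by
  simp [dhat, h]

lemma dhat_singleton (q : Q) (a : A) : M.dhat q [a] = M.delta q a := by
  cases h : M.delta q a <;> simp [dhat, h]

namespace MN

lemma refl (u : Q) : M.MN u u := fun _ => ⟨rfl, Iff.rfl⟩

lemma symm {u v : Q} (h : M.MN u v) : M.MN v u :=
  fun w => ⟨(h w).1.symm, (h w).2.symm⟩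

lemma trans {u v z : Q} (h₁ : M.MN u v) (h₂ : M.MN v z) : M.MN u z :=
  fun w => ⟨(h₁ w).1.trans (h₂ w).1, (h₁ w).2.trans (h₂ w).2⟩

lemma delta_isSome_eq {u v : Q} (h : M.MN u v) (a : A) :
    (M.delta u a).isSome = (M.delta v a).isSome := by
  simpa only [dhat_singleton] using (h [a]).1

lemma delta {u v u' v' : Q} {a : A} (h : M.MN u v)
    (hu : M.delta u a = some u') (hv : M.delta v a = some v') : M.MN u' v' := by
  intro w
  simpa only [Acc, dhat_cons_of_delta_eq_some hu, dhat_cons_of_delta_eq_some hv] using h (a :: w)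

end MN

lemma Equ.symm {lam : Q → WithBot A} {u v : Q} (h : M.Equ lam u v) : M.Equ lam v u := by
  obtain ⟨hlam, hmn, hbetween⟩ := h
  refine ⟨hlam.symm, hmn.symm, fun w h₁ h₂ => ?_⟩
  obtain ⟨hlw, hmw⟩ := hbetween w (min_comm u v ▸ h₁) (max_comm u v ▸ h₂)
  exact ⟨hlw.trans hlam, hmw.trans hmn⟩

lemma delta_le_delta {u v u' v' : Q} {a : A} (hu : M.delta u a = some u')
    (hv : M.delta v a = some v') (huv : u ≤ v) : u' ≤ v' := by
  rcases huv.eq_or_lt with rfl | hlt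
  · exact (Option.some.inj (hu.symm.trans hv)).le
  · exact M.w3 hu hv hlt

lemma exists_delta_eq_of_lt_of_lt (hreach : M.Reach1) {u v u' v' z : Q} {a : A}
    (hu : M.delta u a = some u') (hv : M.delta v a = some v') (hu'z : u' < z) (hzv' : z < v') :
    ∃ p, u < p ∧ p < v ∧ M.delta p a = some z := by
  have hz : z ≠ M.start := fun hz => (hz ▸ hu'z).not_ge (M.start_le u')
  obtain ⟨p, b, hp⟩ := hreach z hz
  obtain rfl : b = a := by
    rcases lt_trichotomy b a with hba | rfl | hab
    · exact absurd (M.w2 hp hu hba) hu'z.not_gt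
    · rfl
    · exact absurd (M.w2 hv hp hab) hzv'.not_gt
  refine ⟨p, lt_of_not_ge fun hpu => ?_, lt_of_not_ge fun hvp => ?_, hp⟩
  · exact (delta_le_delta hp hu hpu).not_gt hu'z
  · exact (delta_le_delta hv hp hvp).not_gt hzv'

lemma Equ.delta_of_le {lam : Q → WithBot A} (hlam : M.HasLam lam) (hreach : M.Reach1)
    {u v u' v' : Q} {a : A} (h : M.Equ lam u v) (huv : u ≤ v)
    (hu : M.delta u a = some u') (hv : M.delta v a = some v') : M.Equ lam u' v' := by
  obtain ⟨-, hmn, hbetween⟩ := h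
  have hlu' : lam u' = a := hlam.2 u a u' hu
  have hlv' : lam v' = a := hlam.2 v a v' hv
  have hmn' : M.MN u' v' := hmn.delta hu hv
  have hu'v' : u' ≤ v' := delta_le_delta hu hv huv
  refine ⟨hlu'.trans hlv'.symm, hmn', fun z hz₁ hz₂ => ?_⟩
  rw [min_eq_left hu'v'] at hz₁
  rw [max_eq_right hu'v'] at hz₂
  rcases hz₁.eq_or_lt with rfl | hu'z
  · exact ⟨rfl, MN.refl _⟩
  rcases hz₂.eq_or_lt with rfl | hzv'
  · exact ⟨hlv'.trans hlu'.symm, hmn'.symm⟩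
  obtain ⟨p, hup, hpv, hp⟩ := exists_delta_eq_of_lt_of_lt hreach hu hv hu'z hzv'
  have hpu : M.MN p u :=
    (hbetween p (by rw [min_eq_left huv]; exact hup.le) (by rw [max_eq_right huv]; exact hpv.le)).2
  exact ⟨(hlam.2 p a z hp).trans hlu'.symm, hpu.delta hp hu⟩

end RightInvariance

end WDFA

/-- the equivalence `≡` is right-invariant. -/
theorem wdfa_equ_right_invariant {Q A : Type} [LinearOrder Q] [LinearOrder A]
    (M : WDFA Q A) (lam : Q → WithBot A) (hlam : M.HasLam lam)
    (hreach : M.Reach1) (u v : Q) (h : M.Equ lam u v) :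
    ∀ a : A, (M.delta u a).isSome = (M.delta v a).isSome ∧
      ∀ u' v' : Q, M.delta u a = some u' → M.delta v a = some v' →
        M.Equ lam u' v' := by
  intro a
  refine ⟨h.2.1.delta_isSome_eq a, fun u' v' hu hv => ?_⟩
  rcases le_total u v with huv | hvu
  · exact h.delta_of_le hlam hreach huv hu hv
  · exact (h.symm.delta_of_le hlam hreach hvu hv hu).symm
end

section
/- The quotient of a Wheeler DFA A by the right-invariant equivalence ≡ (collapsing maximal runs of Wheeler-consecutive, same-incoming-label, Myhill-Nerode-equivalent states) recognizes the same language as A: L(A/≡) = L(A). -/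
namespace WDFA

variable {Q A : Type} [LinearOrder Q] [LinearOrder A]

theorem MN.mnacc {M : WDFA Q A} {u v : Q} (h : M.MN u v) : M.MNacc u v :=
  fun w => (h w).2

theorem Equ.mn {M : WDFA Q A} {lam : Q → WithBot A} {u v : Q} (h : M.Equ lam u v) :
    M.MN u v :=
  h.2.1

variable (M : WDFA Q A)

theorem acc_nil_iff {q : Q} : M.Acc q [] ↔ q ∈ M.F := by
  simp [Acc, dhat]

theorem acc_cons_iff {q : Q} {a : A} {w : List A} :
    M.Acc q (a :: w) ↔ ∃ p, M.delta q a = some p ∧ M.Acc p w := by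
  cases h : M.delta q a <;> simp [Acc, dhat, h]

variable (st : Setoid Q)

def qAccFrom (c : Quotient st) (w : List A) : Prop :=
  ∃ d, M.qdhat st c w = some d ∧ ∃ u ∈ M.F, Quotient.mk st u = d

theorem qAcc_eq_qAccFrom : M.qAcc st = M.qAccFrom st (Quotient.mk st M.start) := rfl

theorem qAccFrom_nil_iff {c : Quotient st} :
    M.qAccFrom st c [] ↔ ∃ u ∈ M.F, Quotient.mk st u = c := by
  simp only [qAccFrom, qdhat, Option.some.injEq, exists_eq_left']

theorem qAccFrom_cons_iff {c : Quotient st} {a : A} {w : List A} :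
    M.qAccFrom st c (a :: w) ↔
      ∃ p, M.delta c.out a = some p ∧ M.qAccFrom st (Quotient.mk st p) w := by
  cases h : M.delta c.out a <;> simp [qAccFrom, qdhat, qdelta, h]

/-- At each step the quotient follows the transition of the representative `[u].out`,
which accepts the same strings as `u`. -/
theorem qAccFrom_mk_iff_acc (hst : ∀ u v, st.r u v → M.MNacc u v) :
    ∀ (w : List A) (u : Q), M.qAccFrom st (Quotient.mk st u) w ↔ M.Acc u w
  | [], u => by
    rw [qAccFrom_nil_iff]
    constructor
    · rintro ⟨f, hf, hfu⟩
      exact (hst f u (Quotient.exact hfu) []).1 (M.acc_nil_iff.2 hf)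
    · exact fun hu => ⟨u, M.acc_nil_iff.1 hu, rfl⟩
  | a :: w, u => by
    have hout : st.r (Quotient.mk st u).out u := Quotient.mk_out u
    calc M.qAccFrom st (Quotient.mk st u) (a :: w)
        ↔ ∃ p, M.delta (Quotient.mk st u).out a = some p ∧ M.Acc p w := by
          simp only [qAccFrom_cons_iff, qAccFrom_mk_iff_acc hst w]
      _ ↔ M.Acc (Quotient.mk st u).out (a :: w) := M.acc_cons_iff.symm
      _ ↔ M.Acc u (a :: w) := hst _ _ hout (a :: w)

end WDFA

theorem wdfa_quotient_language_general {Q A : Type} [LinearOrder Q] [LinearOrder A]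
    (M : WDFA Q A) (lam : Q → WithBot A) (st : Setoid Q)
    (hst : ∀ u v : Q, st.r u v ↔ M.Equ lam u v) :
    ∀ w : List A, M.qAcc st w ↔ M.Acc M.start w := by
  have hmnacc : ∀ u v, st.r u v → M.MNacc u v :=
    fun u v h => ((hst u v).1 h).mn.mnacc
  intro w
  rw [M.qAcc_eq_qAccFrom st]
  exact M.qAccFrom_mk_iff_acc st hmnacc w M.start

/-- the quotient of a Wheeler DFA by `≡` recognizes the same
language. -/
theorem wdfa_quotient_language {Q A : Type} [LinearOrder Q] [LinearOrder A]
    (M : WDFA Q A) (lam : Q → WithBot A) (hlam : M.HasLam lam)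
    (hreach : M.Reach1) (st : Setoid Q)
    (hst : ∀ u v : Q, st.r u v ↔ M.Equ lam u v) :
    ∀ w : List A, M.qAcc st w ↔ M.Acc M.start w :=
  wdfa_quotient_language_general M lam st hst
end

section
/- Reachability in the border graph characterizes propagation: for borders (u_i, u_{i+1}) and (u_j, u_{j+1}) of a Wheeler DFA A, the pair (u_i, u_{i+1}) is reachable from (u_j, u_{j+1}) in the border graph B(A) if and only if there exists a string α ∈ Σ* such that δ̂(u_i, α) = u_j, δ̂(u_{i+1}, α) = u_{j+1}, and for every proper prefix β of α, δ̂(u_i, β) and δ̂(u_{i+1}, β) are distinct Wheeler-adjacent states with equal incoming labels. -/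
/-!
An edge of the border graph reads one letter backwards from a border to a border. Hence a path
in `B(A)` from `(u_j, u_{j+1})` to `(u_i, u_{i+1})` is the same thing as a string `α` taking
`(u_i, u_{i+1})` to `(u_j, u_{j+1})` through borders only: the proper prefixes of `α` account for
every border on the path except the last one, `(u_j, u_{j+1})` itself.
-/

theorem List.forall_prefix_ne_cons_iff {α : Type*} {P : List α → Prop} {a : α} {l : List α} :
    (∀ β, β <+: a :: l → β ≠ a :: l → P β) ↔ P [] ∧ ∀ β, β <+: l → β ≠ l → P (a :: β) := by
  constructor
  · intro h
    exact ⟨h [] List.nil_prefix (by simp), fun β hβ hne =>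
      h (a :: β) (List.cons_prefix_cons.mpr ⟨rfl, hβ⟩) (by simpa using hne)⟩
  · rintro ⟨hnil, hcons⟩ β hβ hne
    obtain rfl | ⟨t, rfl, ht⟩ := List.prefix_cons_iff.mp hβ
    · exact hnil
    · exact hcons t ht (by simpa using hne)

namespace WDFA

variable {Q A : Type} [LinearOrder Q] [LinearOrder A] (M : WDFA Q A) (lam : Q → WithBot A)

theorem dhat_cons_of_delta {u v : Q} {a : A} (h : M.delta u a = some v) (w : List A) :
    M.dhat u (a :: w) = M.dhat v w := by
  simp only [dhat, h, Option.bind_some]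

theorem dhat_cons_eq_some_iff {u p : Q} {a : A} {w : List A} :
    M.dhat u (a :: w) = some p ↔ ∃ v, M.delta u a = some v ∧ M.dhat v w = some p := by
  simp only [dhat, Option.bind_eq_some_iff]

def BorderPath (x y : Q × Q) (α : List A) : Prop :=
  M.dhat x.1 α = some y.1 ∧ M.dhat x.2 α = some y.2 ∧
    ∀ β : List A, β <+: α → β ≠ α →
      ∃ v v' : Q, M.dhat x.1 β = some v ∧ M.dhat x.2 β = some v' ∧
        v ≠ v' ∧ M.Adj v v' ∧ lam v = lam v'

variable {M lam}

theorem borderPath_nil_iff {x y : Q × Q} : M.BorderPath lam x y [] ↔ x = y := by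
  simp [BorderPath, dhat, Prod.ext_iff]

theorem borderPath_cons_iff {x y : Q × Q} {a : A} {α : List A} :
    M.BorderPath lam x y (a :: α) ↔
      ∃ z : Q × Q, M.delta x.1 a = some z.1 ∧ M.delta x.2 a = some z.2 ∧
        M.IsBorder lam x.1 x.2 ∧ M.BorderPath lam z y α := by
  constructor
  · rintro ⟨h₁, h₂, hpre⟩
    obtain ⟨z₁, hz₁, h₁⟩ := M.dhat_cons_eq_some_iff.mp h₁
    obtain ⟨z₂, hz₂, h₂⟩ := M.dhat_cons_eq_some_iff.mp h₂
    obtain ⟨⟨_, _, ⟨⟩, ⟨⟩, -, hx⟩, hpre⟩ := List.forall_prefix_ne_cons_iff.mp hpre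
    refine ⟨(z₁, z₂), hz₁, hz₂, hx, h₁, h₂, fun β hβ hne => ?_⟩
    simpa only [M.dhat_cons_of_delta hz₁, M.dhat_cons_of_delta hz₂] using hpre β hβ hne
  · rintro ⟨z, hz₁, hz₂, hx, h₁, h₂, hpre⟩
    refine ⟨by rwa [M.dhat_cons_of_delta hz₁], by rwa [M.dhat_cons_of_delta hz₂],
      List.forall_prefix_ne_cons_iff.mpr ⟨⟨_, _, rfl, rfl, hx.1.1.ne, hx⟩, fun β hβ hne => ?_⟩⟩
    simpa only [M.dhat_cons_of_delta hz₁, M.dhat_cons_of_delta hz₂] using hpre β hβ hne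

theorem isBorder_of_reflTransGen_edgeZ {x y : Q × Q}
    (h : Relation.ReflTransGen (M.EdgeZ lam) x y) (hx : M.IsBorder lam x.1 x.2) :
    M.IsBorder lam y.1 y.2 := by
  cases h.cases_tail with
  | inl h => exact h ▸ hx
  | inr h => obtain ⟨_, _, hedge⟩ := h; exact hedge.2.1

theorem exists_borderPath_of_reflTransGen_edgeZ {x y : Q × Q}
    (h : Relation.ReflTransGen (M.EdgeZ lam) y x) : ∃ α, M.BorderPath lam x y α := by
  induction h with
  | refl => exact ⟨[], borderPath_nil_iff.mpr rfl⟩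
  | @tail b c _ hbc ih =>
    obtain ⟨α, hα⟩ := ih
    obtain ⟨-, hc, a, -, hb₁, hb₂⟩ := hbc
    exact ⟨a :: α, borderPath_cons_iff.mpr ⟨b, hb₁, hb₂, hc, hα⟩⟩

theorem reflTransGen_edgeZ_of_borderPath (hlam : M.HasLam lam) {x y : Q × Q}
    (hy : M.IsBorder lam y.1 y.2) {α : List A} (h : M.BorderPath lam x y α) :
    Relation.ReflTransGen (M.EdgeZ lam) y x := by
  induction α generalizing x with
  | nil => exact borderPath_nil_iff.mp h ▸ .refl
  | cons a α ih =>
    obtain ⟨z, hz₁, hz₂, hx, hz⟩ := borderPath_cons_iff.mp h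
    have hzy := ih hz
    exact hzy.tail ⟨isBorder_of_reflTransGen_edgeZ hzy hy, hx, a, hlam.2 _ _ _ hz₁, hz₁, hz₂⟩

end WDFA

theorem wdfa_border_reachability_general {Q A : Type} [LinearOrder Q] [LinearOrder A]
    (M : WDFA Q A) (lam : Q → WithBot A) (hlam : M.HasLam lam)
    (ui ui1 uj uj1 : Q)
    (hbj : M.IsBorder lam uj uj1) :
    Relation.ReflTransGen (M.EdgeZ lam) (uj, uj1) (ui, ui1) ↔
      ∃ α : List A, M.dhat ui α = some uj ∧ M.dhat ui1 α = some uj1 ∧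
        ∀ β : List A, β <+: α → β ≠ α →
          ∃ v v' : Q, M.dhat ui β = some v ∧ M.dhat ui1 β = some v' ∧
            v ≠ v' ∧ M.Adj v v' ∧ lam v = lam v' :=
  ⟨WDFA.exists_borderPath_of_reflTransGen_edgeZ,
    fun ⟨_, h⟩ => WDFA.reflTransGen_edgeZ_of_borderPath hlam hbj h⟩

/-- reachability in the border graph characterizes propagation
via strings whose intermediate images are distinct Wheeler-adjacent states
with equal incoming labels. -/
theorem wdfa_border_reachability {Q A : Type} [LinearOrder Q] [LinearOrder A]
    (M : WDFA Q A) (lam : Q → WithBot A) (hlam : M.HasLam lam)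
    (ui ui1 uj uj1 : Q)
    (hbi : M.IsBorder lam ui ui1) (hbj : M.IsBorder lam uj uj1) :
    Relation.ReflTransGen (M.EdgeZ lam) (uj, uj1) (ui, ui1) ↔
      ∃ α : List A, M.dhat ui α = some uj ∧ M.dhat ui1 α = some uj1 ∧
        ∀ β : List A, β <+: α → β ≠ α →
          ∃ v v' : Q, M.dhat ui β = some v ∧ M.dhat ui1 β = some v' ∧
            v ≠ v' ∧ M.Adj v v' ∧ lam v = lam v' :=
  wdfa_border_reachability_general M lam hlam ui ui1 uj uj1 hbj
end

section
/- In a Wheeler DFA, let u_i < u_{i+1} be states that are adjacent in the Wheeler order, and suppose δ(u_i, a) = v and δ(u_{i+1}, a) = v'' for a letter a. Then there is no state w with v < w < v''. -/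
/-- if `v = δ(u_i, a)` and `v'' = δ(u_{i+1}, a)` for adjacent
states `u_i, u_{i+1}`, then any state `w` strictly between `v` and `v''`
would have incoming label `a` and every `a`-predecessor `p` of `w` would
satisfy `u_i < p < u_{i+1}`, contradicting adjacency; hence no such `w`
exists. -/
theorem wdfa_no_state_between {Q A : Type} [LinearOrder Q] [LinearOrder A]
    (M : WDFA Q A) (lam : Q → WithBot A) (hlam : M.HasLam lam)
    (hreach : M.Reach1) (ui ui1 : Q) (hadj : M.Adj ui ui1) (a : A)
    (v v'' : Q) (h1 : M.delta ui a = some v) (h2 : M.delta ui1 a = some v'') :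
    (∀ w : Q, v < w → w < v'' →
      lam w = (a : WithBot A) ∧
        ∀ p : Q, M.delta p a = some w → ui < p ∧ p < ui1) ∧
    ¬ ∃ w : Q, v < w ∧ w < v'' := by
  have key : ∀ w : Q, v < w → w < v'' →
      lam w = (a : WithBot A) ∧
        ∀ p : Q, M.delta p a = some w → ui < p ∧ p < ui1 := by
    intro w hvw hwv
    have hwstart : w ≠ M.start := by
      intro h; subst h
      exact absurd hvw (not_lt.2 (M.start_le v))
    obtain ⟨p, b, hpb⟩ := hreach w hwstart
    have hba : b = a := by
      rcases lt_trichotomy b a with h | h | h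
      · exact absurd (M.w2 hpb h1 h) (not_lt.2 hvw.le)
      · exact h
      · exact absurd (M.w2 h2 hpb h) (not_lt.2 hwv.le)
    subst hba
    have hpred : ∀ p : Q, M.delta p b = some w → ui < p ∧ p < ui1 := by
      intro p hp
      constructor
      · rcases lt_trichotomy p ui with h | h | h
        · exact absurd (M.w3 hp h1 h) (not_le.2 hvw)
        · subst h; rw [hp] at h1; exact absurd (Option.some_inj.1 h1) hvw.ne'
        · exact h
      · rcases lt_trichotomy p ui1 with h | h | h
        · exact h
        · subst h; rw [hp] at h2; exact absurd (Option.some_inj.1 h2) hwv.ne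
        · exact absurd (M.w3 h2 hp h) (not_le.2 hwv)
    exact ⟨hlam.2 p b w hpb, hpred⟩
  refine ⟨key, ?_⟩
  rintro ⟨w, hvw, hwv⟩
  have hwstart : w ≠ M.start := by
    intro h; subst h
    exact absurd hvw (not_lt.2 (M.start_le v))
  obtain ⟨p, b, hpb⟩ := hreach w hwstart
  have hba : b = a := by
    rcases lt_trichotomy b a with h | h | h
    · exact absurd (M.w2 hpb h1 h) (not_lt.2 hvw.le)
    · exact h
    · exact absurd (M.w2 h2 hpb h) (not_lt.2 hwv.le)
  subst hba
  exact hadj.2 p ((key w hvw hwv).2 p hpb)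
end
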